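/- arXiv:1909.08939 — 2 statements merged into one kernel-verified Lean document; each statement's English description precedes it below -/
import Mathlib

section
/- Let h ∈ L¹(ℝⁿ) be compactly supported and let (θ_k)_{k∈ℕ} be a sequence of pairwise distinct unit vectors in 𝕊^{n-1}. If for every k ∈ ℕ and every ξ ∈ ℝⁿ with ξ·θ_k = 0 the Fourier transform ∫_{ℝⁿ} h(x) e^{-i x·ξ} dx vanishes, then h = 0 almost everywhere. -/
/-!
The Fourier transform `ĥ` of `h` is entire along every complex line `ξ + ℂ v`. Pass to a
subsequence `θ_k → a`. For a generic direction `v` (one avoiding countably many hyperplanes,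
by Baire), the real line `ξ + ℝ v` meets `θ_kᗮ` at parameters `t_k` converging to, but
eventually different from, the parameter `t₀` at which it meets `aᗮ`. So the restriction of `ĥ`
to this line has a non-isolated zero at `t₀`, vanishes identically, and in particular
`ĥ(ξ) = 0`. Fourier uniqueness then gives `h = 0` a.e.
-/

open MeasureTheory Filter Complex Set
open scoped RealInnerProductSpace Topology FourierTransform

section EntireAlongLines

variable {E : Type*} [NormedAddCommGroup E] [InnerProductSpace ℝ E]

def EntireAlongLines (f : E → ℂ) : Prop :=
  ∀ ξ v : E, ∃ Ψ : ℂ → ℂ, Differentiable ℂ Ψ ∧ ∀ t : ℝ, Ψ t = f (ξ + t • v)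

lemma norm_cexp_mul_le {z w : ℂ} {R B : ℝ} (hz : ‖z‖ ≤ R) (hw : ‖w‖ ≤ B) :
    ‖cexp (z * w)‖ ≤ Real.exp (R * B) :=
  (norm_exp_le_exp_norm _).trans <| Real.exp_le_exp.2 <| by
    rw [norm_mul]
    exact mul_le_mul hz hw (norm_nonneg _) ((norm_nonneg _).trans hz)

theorem differentiable_integral_mul_cexp_mul {X : Type*} [TopologicalSpace X] [MeasurableSpace X]
    [OpensMeasurableSpace X] {μ : Measure X} {h g : X → ℂ} (hh : Integrable h μ)
    (hsupp : HasCompactSupport h) (hg : Continuous g) :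
    Differentiable ℂ fun z => ∫ x, h x * cexp (z * g x) ∂μ := by
  obtain ⟨B, hB⟩ := hsupp.isCompact.exists_bound_of_continuousOn hg.continuousOn
  have hbound : ∀ x, h x = 0 ∨ ‖g x‖ ≤ B := fun x =>
    (em (x ∈ tsupport h)).symm.imp image_eq_zero_of_notMem_tsupport (hB x)
  intro z₀
  set R := ‖z₀‖ + 1
  have hball : ∀ z ∈ Metric.ball z₀ 1, ‖z‖ ≤ R := fun z hz => by
    have := norm_le_norm_add_norm_sub' z z₀
    rw [Metric.mem_ball, dist_eq_norm] at hz
    simp only [R]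
    linarith
  have hmeas : ∀ z : ℂ, AEStronglyMeasurable (fun x => h x * cexp (z * g x)) μ := fun z =>
    hh.aestronglyMeasurable.mul
      (by fun_prop : Continuous fun x => cexp (z * g x)).aestronglyMeasurable
  refine (hasDerivAt_integral_of_dominated_loc_of_deriv_le (x₀ := z₀)
    (F' := fun z x => h x * (cexp (z * g x) * g x))
    (bound := fun x => ‖h x‖ * (Real.exp (R * B) * B)) (Metric.ball_mem_nhds z₀ one_pos)
    (.of_forall hmeas) ?_ ?_ ?_ (hh.norm.mul_const _) ?_).2.differentiableAt
  · refine (hh.norm.mul_const (Real.exp (R * B))).mono' (hmeas z₀) (.of_forall fun x => ?_)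
    rw [norm_mul]
    rcases hbound x with hx | hx
    · simp [hx]
    · exact mul_le_mul_of_nonneg_left (norm_cexp_mul_le (by simp [R]) hx) (norm_nonneg _)
  · exact hh.aestronglyMeasurable.mul
      (by fun_prop : Continuous fun x => cexp (z₀ * g x) * g x).aestronglyMeasurable
  · refine .of_forall fun x z hz => ?_
    rw [norm_mul, norm_mul]
    rcases hbound x with hx | hx
    · simp [hx]
    · exact mul_le_mul_of_nonneg_left (mul_le_mul (norm_cexp_mul_le (hball z hz) hx) hx
        (norm_nonneg _) (Real.exp_pos _).le) (norm_nonneg _)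
  · refine .of_forall fun x z _ => ?_
    simpa using (((hasDerivAt_id z).mul_const (g x)).cexp).const_mul (h x)

theorem entireAlongLines_integral_mul_cexp_inner [MeasurableSpace E] [OpensMeasurableSpace E]
    {μ : Measure E} {h : E → ℂ} (hh : Integrable h μ) (hsupp : HasCompactSupport h) :
    EntireAlongLines fun ξ => ∫ x, h x * cexp (-I * ⟪x, ξ⟫) ∂μ := by
  intro ξ v
  have hξ : Continuous fun x : E => cexp (-I * ⟪x, ξ⟫) := by fun_prop
  refine ⟨_, differentiable_integral_mul_cexp_mul (g := fun x => -I * ⟪x, v⟫)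
    (hh.mul_bdd hξ.aestronglyMeasurable (c := 1) (.of_forall fun x => ?_)) hsupp.mul_right
    (by fun_prop), fun t => integral_congr_ae (.of_forall fun x => ?_)⟩
  · rw [neg_mul, norm_exp, neg_re, re_mul_ofReal, I_re, zero_mul, neg_zero, Real.exp_zero]
  · simp only [mul_assoc, ← Complex.exp_add, inner_add_right, real_inner_smul_right]
    push_cast
    ring_nf

theorem exists_forall_inner_ne_zero [CompleteSpace E] {s : Set E} (hs : s.Countable)
    (h0 : 0 ∉ s) : ∃ v : E, ∀ w ∈ s, ⟪v, w⟫ ≠ 0 := by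
  by_contra! hcover
  have : Countable s := hs.to_subtype
  obtain ⟨w, hw⟩ := nonempty_interior_of_iUnion_of_closed
    (f := fun w : s => ((ℝ ∙ (w : E))ᗮ : Set E)) (fun w => Submodule.isClosed_orthogonal _)
    (eq_univ_of_forall fun v => by
      obtain ⟨w, hws, hvw⟩ := hcover v
      exact mem_iUnion.2 ⟨⟨w, hws⟩, Submodule.mem_orthogonal_singleton_iff_inner_right.2
        (by rwa [real_inner_comm])⟩)
  have hw_top := Submodule.eq_top_of_nonempty_interior' _ hw
  have : ⟪(w : E), w⟫ = 0 :=
    Submodule.mem_orthogonal_singleton_iff_inner_right.1 (hw_top ▸ Submodule.mem_top)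
  exact h0 (inner_self_eq_zero.1 this ▸ w.2)

theorem eq_or_eq_neg_of_smul_eq_smul {x y : E} (hx : ‖x‖ = 1) (hy : ‖y‖ = 1) {c d : ℝ}
    (hc : c ≠ 0) (h : c • x = d • y) : x = y ∨ x = -y := by
  have hx' : x = (d / c) • y := by rw [div_eq_inv_mul, mul_smul, ← h, inv_smul_smul₀ hc]
  have : |d / c| = 1 := by simpa [hx, hy, norm_smul, abs_div, eq_comm] using congrArg norm hx'
  rcases abs_eq zero_le_one |>.1 this with h1 | h1 <;> simp [hx', h1]

theorem eventually_inner_smul_sub_inner_smul_ne_zero {θ : ℕ → E} {a ξ : E}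
    (hθ : ∀ k, ‖θ k‖ = 1) (hinj : Function.Injective θ) (ha : ‖a‖ = 1)
    (hξ : ∀ k, ⟪ξ, θ k⟫ ≠ 0) : ∀ᶠ k in atTop, ⟪ξ, θ k⟫ • a - ⟪ξ, a⟫ • θ k ≠ 0 := by
  have hfin : (θ ⁻¹' {a, -a}).Finite := (toFinite _).preimage hinj.injOn
  rw [← Nat.cofinite_eq_atTop]
  filter_upwards [hfin.eventually_cofinite_notMem] with k hk hzero
  rcases eq_or_eq_neg_of_smul_eq_smul ha (hθ k) (hξ k) (sub_eq_zero.1 hzero) with rfl | rfl <;>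
    simp at hk

theorem Differentiable.eq_zero_of_tendsto_of_eventually_eq_zero {ι : Type*} {l : Filter ι}
    [l.NeBot] {Ψ : ℂ → ℂ} (hΨ : Differentiable ℂ Ψ) {s : ι → ℂ} {z₀ : ℂ}
    (hs : Tendsto s l (𝓝[≠] z₀)) (hzero : ∀ᶠ i in l, Ψ (s i) = 0) : Ψ = 0 :=
  funext fun z => (hΨ.differentiableOn.analyticOnNhd isOpen_univ)
    |>.eqOn_zero_of_preconnected_of_frequently_eq_zero isPreconnected_univ (mem_univ z₀)
      (hs.frequently hzero.frequently) (mem_univ z)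

theorem EntireAlongLines.eq_zero_of_forall_orthogonal_eq_zero [CompleteSpace E] {f : E → ℂ}
    (hf : EntireAlongLines f) {θ : ℕ → E} {a : E} (hθ : ∀ k, ‖θ k‖ = 1)
    (hinj : Function.Injective θ) (hlim : Tendsto θ atTop (𝓝 a))
    (hvan : ∀ k ξ, ⟪ξ, θ k⟫ = 0 → f ξ = 0) : f = 0 := by
  have ha : ‖a‖ = 1 := tendsto_nhds_unique hlim.norm (by simp [hθ])
  funext ξ
  by_cases hξ : ∃ k, ⟪ξ, θ k⟫ = 0
  · obtain ⟨k, hk⟩ := hξ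
    exact hvan k ξ hk
  push Not at hξ
  set u : ℕ → E := fun k => ⟪ξ, θ k⟫ • a - ⟪ξ, a⟫ • θ k
  obtain ⟨v, hv⟩ := exists_forall_inner_ne_zero (s := insert a (range u \ {0}))
    (((countable_range u).mono sdiff_subset).insert a) (by simp [eq_comm, ← norm_eq_zero, ha])
  have hva : ⟪v, a⟫ ≠ 0 := hv a (mem_insert _ _)
  obtain ⟨Ψ, hΨ, hΨf⟩ := hf ξ v
  have hvθ : Tendsto (fun k => ⟪v, θ k⟫) atTop (𝓝 ⟪v, a⟫) := tendsto_const_nhds.inner hlim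
  have hvθ_ne : ∀ᶠ k in atTop, ⟪v, θ k⟫ ≠ 0 := hvθ.eventually_ne hva
  -- `ξ + t k • v ∈ (θ k)ᗮ` and `ξ + t₀ • v ∈ aᗮ`
  set t : ℕ → ℝ := fun k => -⟪ξ, θ k⟫ / ⟪v, θ k⟫
  set t₀ : ℝ := -⟪ξ, a⟫ / ⟪v, a⟫
  have ht : Tendsto t atTop (𝓝 t₀) := (tendsto_const_nhds.inner hlim).neg.div hvθ hva
  have ht_ne : ∀ᶠ k in atTop, t k ≠ t₀ := by
    filter_upwards [hvθ_ne, eventually_inner_smul_sub_inner_smul_ne_zero hθ hinj ha hξ]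
      with k hk huk heq
    apply hv (u k) (.inr ⟨mem_range_self k, huk⟩)
    rw [div_eq_div_iff hk hva] at heq
    simp only [u, inner_sub_right, real_inner_smul_right]
    linarith
  have hzero : ∀ᶠ k in atTop, Ψ (t k) = 0 := by
    filter_upwards [hvθ_ne] with k hk
    rw [hΨf]
    apply hvan k
    rw [inner_add_left, real_inner_smul_left, div_mul_cancel₀ _ hk, add_neg_cancel]
  have hΨ0 := hΨ.eq_zero_of_tendsto_of_eventually_eq_zero (s := fun k => (t k : ℂ))
    (tendsto_nhdsWithin_iff.2 ⟨(continuous_ofReal.tendsto t₀).comp ht,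
      ht_ne.mono fun k hk => by simpa using hk⟩) hzero
  have h0 := hΨf 0
  rwa [ofReal_zero, zero_smul, add_zero, hΨ0, Pi.zero_apply, eq_comm] at h0

end EntireAlongLines

section FourierUniqueness

variable {V : Type*} [NormedAddCommGroup V] [InnerProductSpace ℝ V] [FiniteDimensional ℝ V]
  [MeasurableSpace V] [BorelSpace V]

theorem fourier_eq_integral_mul_cexp_inner (f : V → ℂ) (w : V) :
    𝓕 f w = ∫ x, f x * cexp (-I * ⟪x, (2 * Real.pi) • w⟫) := by
  rw [Real.fourier_eq']
  congr 1 with x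
  rw [smul_eq_mul, mul_comm, real_inner_smul_right]
  push_cast
  ring_nf

theorem MeasureTheory.Integrable.ae_eq_zero_of_fourier_eq_zero {f : V → ℂ} (hf : Integrable f)
    (hf0 : 𝓕 f = 0) : f =ᵐ[volume] 0 := by
  refine ae_eq_zero_of_integral_contDiff_smul_eq_zero hf.locallyIntegrable fun g hg hgc => ?_
  let ψ : SchwartzMap V ℂ :=
    (hgc.comp_left Complex.ofReal_zero).toSchwartzMap (Complex.ofRealCLM.contDiff.comp hg)
  let φ : SchwartzMap V ℂ := 𝓕⁻ ψ
  have hφ : 𝓕 (φ : V → ℂ) = ψ := by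
    rw [← SchwartzMap.fourier_coe, FourierTransform.fourier_fourierInv_eq]
  calc ∫ x, g x • f x = ∫ x, 𝓕 (φ : V → ℂ) x • f x := by
        simp only [hφ, Complex.real_smul]
        rfl
    _ = ∫ x, φ x • 𝓕 f x := by
        have := VectorFourier.integral_fourierIntegral_smul_eq_flip (L := innerₗ V)
          Real.continuous_fourierChar continuous_inner (φ.integrable (μ := volume)) hf
        rwa [flip_innerₗ] at this
    _ = 0 := by simp [hf0]

end FourierUniqueness

theorem stmt1 (n : ℕ) (h : EuclideanSpace ℝ (Fin n) → ℂ)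
    (hint : Integrable h) (hsupp : HasCompactSupport h)
    (θ : ℕ → EuclideanSpace ℝ (Fin n)) (hθ : ∀ k, ‖θ k‖ = 1)
    (hinj : Function.Injective θ)
    (hvan : ∀ (k : ℕ) (ξ : EuclideanSpace ℝ (Fin n)), ⟪ξ, θ k⟫ = 0 →
      ∫ x, h x * Complex.exp (-Complex.I * ((⟪x, ξ⟫ : ℝ) : ℂ)) = 0) :
    h =ᵐ[volume] 0 := by
  obtain ⟨a, -, φ, hφ, hlim⟩ := (isCompact_sphere (0 : EuclideanSpace ℝ (Fin n)) 1).tendsto_subseq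
    (x := θ) fun k => by simp [hθ k]
  have hfourier : (fun ξ => ∫ x, h x * cexp (-I * ⟪x, ξ⟫)) = 0 :=
    (entireAlongLines_integral_mul_cexp_inner hint hsupp).eq_zero_of_forall_orthogonal_eq_zero
      (fun k => hθ (φ k)) (hinj.comp hφ.injective) hlim fun k => hvan (φ k)
  refine hint.ae_eq_zero_of_fourier_eq_zero (funext fun w => ?_)
  rw [fourier_eq_integral_mul_cexp_inner]
  exact congrFun hfourier _
end

section
/- Let Ω ⊂ ℝⁿ be a bounded C² domain, η₁ a unit vector, ρ > 0, and w ∈ H²(Ω)∩H¹₀(Ω) real-valued. With P_+ = Δ + ρ² and P_- = 2ρ η₁·∇, we have ‖(P_+ + P_-)w‖²_{L²(Ω)} ≥ ‖P_-w‖²_{L²(Ω)} + 2ρ ∫_{∂Ω}|∂_ν w|²(η₁·ν) dσ. -/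
open MeasureTheory
open scoped RealInnerProductSpace Topology BigOperators

/-- The Laplacian of a function on `ℝⁿ`, defined via second derivatives. -/
noncomputable def lap {n : ℕ} {E : Type*} [NormedAddCommGroup E] [NormedSpace ℝ E]
    (f : EuclideanSpace ℝ (Fin n) → E) (x : EuclideanSpace ℝ (Fin n)) : E :=
  ∑ i, iteratedFDeriv ℝ 2 f x ![EuclideanSpace.single i 1, EuclideanSpace.single i 1]

/-- The divergence of a vector field on `ℝⁿ`. -/
noncomputable def divg {n : ℕ} (F : EuclideanSpace ℝ (Fin n) → EuclideanSpace ℝ (Fin n))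
    (x : EuclideanSpace ℝ (Fin n)) : ℝ :=
  ∑ i, ⟪fderiv ℝ F x (EuclideanSpace.single i 1), EuclideanSpace.single i 1⟫

/-!
Expand the square: `∫ (P₊w + P₋w)² = ∫ (P₊w)² + ∫ (P₋w)² + 2 ∫ P₊w · P₋w`, and drop
`∫ (P₊w)² ≥ 0`. The cross term is `2ρ (∫ 2 ∂_η w Δw + ρ² ∫ 2 w ∂_η w)`, and both integrands are
divergences: `2 w ∂_η w = div (w² η)` and, by the Rellich identity,
`2 ∂_η w Δw = div (2 ∂_η w ∇w - |∇w|² η)`. On `∂Ω` the first field vanishes because `w = 0`,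
and since `∇w = (∂_ν w) ν` there, the second has normal component `|∂_ν w|² (η · ν)`.
-/

section Divergence

variable {n : ℕ} {x : EuclideanSpace ℝ (Fin n)}

local notation "𝔼" => EuclideanSpace ℝ (Fin n)

lemma sum_apply_single_mul_inner (T : 𝔼 →L[ℝ] ℝ) (v : 𝔼) :
    ∑ i, T (EuclideanSpace.single i 1) * ⟪v, EuclideanSpace.single i 1⟫ = T v := by
  have hv : ∑ i, ⟪v, EuclideanSpace.single i 1⟫ • (EuclideanSpace.single i 1 : 𝔼) = v := by
    have := (EuclideanSpace.basisFun (Fin n) ℝ).sum_repr' v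
    simp only [EuclideanSpace.basisFun_apply] at this
    simpa [real_inner_comm] using this
  conv_rhs => rw [← hv]
  simp [map_sum, mul_comm]

lemma divg_smul_const {f : 𝔼 → ℝ} (hf : DifferentiableAt ℝ f x) (c : 𝔼) :
    divg (fun y => f y • c) x = fderiv ℝ f x c := by
  unfold divg
  rw [fderiv_smul_const hf c]
  simp only [ContinuousLinearMap.smulRight_apply, real_inner_smul_left]
  exact sum_apply_single_mul_inner (fderiv ℝ f x) c

lemma divg_smul {f : 𝔼 → ℝ} {G : 𝔼 → 𝔼}
    (hf : DifferentiableAt ℝ f x) (hG : DifferentiableAt ℝ G x) :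
    divg (fun y => f y • G y) x = fderiv ℝ f x (G x) + f x * divg G x := by
  unfold divg
  rw [fderiv_fun_smul hf hG]
  simp only [add_apply, smul_apply,
    ContinuousLinearMap.smulRight_apply, inner_add_left, real_inner_smul_left]
  rw [Finset.sum_add_distrib, ← Finset.mul_sum, sum_apply_single_mul_inner]
  ring

lemma divg_sub {A B : 𝔼 → 𝔼} (hA : DifferentiableAt ℝ A x) (hB : DifferentiableAt ℝ B x) :
    divg (fun y => A y - B y) x = divg A x - divg B x := by
  unfold divg
  rw [fderiv_fun_sub hA hB]
  simp [inner_sub_left, Finset.sum_sub_distrib]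

end Divergence

section SecondDerivatives

variable {n : ℕ} {x : EuclideanSpace ℝ (Fin n)} {w : EuclideanSpace ℝ (Fin n) → ℝ}

local notation "𝔼" => EuclideanSpace ℝ (Fin n)

lemma contDiff_gradient (hw : ContDiff ℝ 2 w) : ContDiff ℝ 1 (gradient w) :=
  (InnerProductSpace.toDual ℝ 𝔼).symm.contDiff.comp (hw.fderiv_right (by norm_num))

lemma inner_fderiv_gradient (v z : 𝔼) :
    ⟪fderiv ℝ (gradient w) x v, z⟫ = fderiv ℝ (fderiv ℝ w) x v z := by
  have h : gradient w = (InnerProductSpace.toDual ℝ 𝔼).symm ∘ fderiv ℝ w := rfl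
  rw [h, LinearIsometryEquiv.comp_fderiv]
  exact InnerProductSpace.toDual_symm_apply

lemma divg_gradient : divg (gradient w) x = lap w x := by
  unfold divg lap
  refine Finset.sum_congr rfl fun i _ => ?_
  rw [inner_fderiv_gradient, iteratedFDeriv_two_apply]
  simp

lemma continuous_lap (hw : ContDiff ℝ 2 w) : Continuous (lap w) :=
  continuous_finsetSum _ fun _ _ =>
    (continuous_eval_const _).comp (hw.continuous_iteratedFDeriv le_rfl)

lemma contDiff_fderiv_apply (hw : ContDiff ℝ 2 w) (η : 𝔼) :
    ContDiff ℝ 1 (fun y => fderiv ℝ w y η) :=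
  (hw.fderiv_right le_rfl).clm_apply contDiff_const

lemma divg_mul_self_smul (hw : DifferentiableAt ℝ w x) (η : 𝔼) :
    divg (fun y => (w y * w y) • η) x = 2 * w x * fderiv ℝ w x η := by
  rw [divg_smul_const (hw.fun_mul hw), fderiv_fun_mul hw hw]
  simp only [add_apply, smul_apply, smul_eq_mul]
  ring

noncomputable def rellichField (w : 𝔼 → ℝ) (η : 𝔼) (y : 𝔼) : 𝔼 :=
  (2 * fderiv ℝ w y η) • gradient w y - ⟪gradient w y, gradient w y⟫ • η

lemma contDiff_rellichField (hw : ContDiff ℝ 2 w) (η : 𝔼) :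
    ContDiff ℝ 1 (rellichField w η) :=
  ((contDiff_const.mul (contDiff_fderiv_apply hw η)).smul (contDiff_gradient hw)).sub
    (((contDiff_gradient hw).inner ℝ (contDiff_gradient hw)).smul contDiff_const)

lemma divg_rellichField (hw : ContDiff ℝ 2 w) (η : 𝔼) :
    divg (rellichField w η) x = 2 * fderiv ℝ w x η * lap w x := by
  have hg : DifferentiableAt ℝ (gradient w) x :=
    (contDiff_gradient hw).differentiable one_ne_zero x
  have hd : DifferentiableAt ℝ (fderiv ℝ w) x :=
    (hw.fderiv_right (m := 1) le_rfl).differentiable one_ne_zero x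
  have hu : DifferentiableAt ℝ (fun y => fderiv ℝ w y η) x :=
    (contDiff_fderiv_apply hw η).differentiable one_ne_zero x
  have hgg : DifferentiableAt ℝ (fun y => ⟪gradient w y, gradient w y⟫) x := hg.inner ℝ hg
  have h_dir : fderiv ℝ (fun y => 2 * fderiv ℝ w y η) x (gradient w x)
      = 2 * fderiv ℝ (fderiv ℝ w) x (gradient w x) η := by
    rw [fderiv_const_mul hu, fderiv_clm_apply hd (differentiableAt_const η)]
    simp
  have h_sq : fderiv ℝ (fun y => ⟪gradient w y, gradient w y⟫) x η
      = 2 * fderiv ℝ (fderiv ℝ w) x η (gradient w x) := by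
    rw [fderiv_inner_apply (𝕜 := ℝ) hg hg, real_inner_comm _ (gradient w x),
      inner_fderiv_gradient]
    ring
  unfold rellichField
  -- the two second-order terms cancel by symmetry of the Hessian
  rw [divg_sub ((hu.const_mul 2).fun_smul hg) (hgg.smul_const η), divg_smul (hu.const_mul 2) hg,
    divg_smul_const hgg η, divg_gradient, h_dir, h_sq,
    (hw.contDiffAt.isSymmSndFDerivAt (by simp)).eq (gradient w x) η]
  ring

lemma inner_rellichField_of_gradient_eq_smul {ν : 𝔼} (hν : ‖ν‖ = 1) (η : 𝔼)
    (hgrad : gradient w x = fderiv ℝ w x ν • ν) :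
    ⟪rellichField w η x, ν⟫ = fderiv ℝ w x ν ^ 2 * ⟪η, ν⟫ := by
  have hνν : ⟪ν, ν⟫ = (1 : ℝ) := by rw [real_inner_self_eq_norm_sq, hν]; norm_num
  have hη : fderiv ℝ w x η = fderiv ℝ w x ν * ⟪ν, η⟫ := by
    rw [← inner_gradient_left, hgrad, real_inner_smul_left]
  simp only [rellichField, inner_sub_left, real_inner_smul_left, real_inner_smul_right, hgrad,
    hνν, hη, real_inner_comm ν η]
  ring

end SecondDerivatives

section BoundaryIntegrals

variable {n : ℕ} {Ω : Set (EuclideanSpace ℝ (Fin n))}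
  {ν : EuclideanSpace ℝ (Fin n) → EuclideanSpace ℝ (Fin n)} {σ : Measure (EuclideanSpace ℝ (Fin n))}
  {w : EuclideanSpace ℝ (Fin n) → ℝ}

local notation "𝔼" => EuclideanSpace ℝ (Fin n)

def HasDivergenceTheorem (Ω : Set 𝔼) (ν : 𝔼 → 𝔼) (σ : Measure 𝔼) : Prop :=
  ∀ F : 𝔼 → 𝔼, ContDiff ℝ 1 F → ∫ x in Ω, divg F x = ∫ x in frontier Ω, ⟪F x, ν x⟫ ∂σ

lemma setIntegral_mul_fderiv_eq_zero (hdiv : HasDivergenceTheorem Ω ν σ) (hw : ContDiff ℝ 1 w)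
    (hw0 : ∀ x ∈ frontier Ω, w x = 0) (η : 𝔼) :
    ∫ x in Ω, 2 * w x * fderiv ℝ w x η = 0 := by
  calc ∫ x in Ω, 2 * w x * fderiv ℝ w x η
      = ∫ x in Ω, divg (fun y => (w y * w y) • η) x := by
        simp only [divg_mul_self_smul (hw.differentiable one_ne_zero _)]
    _ = ∫ x in frontier Ω, ⟪(w x * w x) • η, ν x⟫ ∂σ := hdiv _ ((hw.mul hw).smul contDiff_const)
    _ = 0 := by
        rw [setIntegral_congr_fun isClosed_frontier.measurableSet
          (g := fun _ => (0 : ℝ)) fun x hx => by simp [hw0 x hx]]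
        simp

lemma setIntegral_fderiv_mul_lap (hdiv : HasDivergenceTheorem Ω ν σ)
    (hν : ∀ x ∈ frontier Ω, ‖ν x‖ = 1) (hw : ContDiff ℝ 2 w)
    (hgrad : ∀ x ∈ frontier Ω, gradient w x = (fderiv ℝ w x (ν x)) • ν x) (η : 𝔼) :
    ∫ x in Ω, 2 * fderiv ℝ w x η * lap w x
      = ∫ x in frontier Ω, fderiv ℝ w x (ν x) ^ 2 * ⟪η, ν x⟫ ∂σ := by
  calc ∫ x in Ω, 2 * fderiv ℝ w x η * lap w x = ∫ x in Ω, divg (rellichField w η) x := by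
        simp only [divg_rellichField hw]
    _ = ∫ x in frontier Ω, ⟪rellichField w η x, ν x⟫ ∂σ := hdiv _ (contDiff_rellichField hw η)
    _ = ∫ x in frontier Ω, fderiv ℝ w x (ν x) ^ 2 * ⟪η, ν x⟫ ∂σ :=
        setIntegral_congr_fun isClosed_frontier.measurableSet fun x hx =>
          inner_rellichField_of_gradient_eq_smul (hν x hx) η (hgrad x hx)

end BoundaryIntegrals

section SquareExpansion

variable {X : Type*} [MetricSpace X] [ProperSpace X] [MeasurableSpace X]
  [OpensMeasurableSpace X] {μ : Measure X} [IsFiniteMeasureOnCompacts μ] {Ω : Set X}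

lemma Continuous.integrableOn_of_isBounded {f : X → ℝ} (hf : Continuous f)
    (hΩ : Bornology.IsBounded Ω) : IntegrableOn f Ω μ :=
  (hf.continuousOn.integrableOn_compact hΩ.isCompact_closure).mono_set subset_closure

lemma setIntegral_sq_add_two_mul_le {f g : X → ℝ} (hf : Continuous f) (hg : Continuous g)
    (hΩ : Bornology.IsBounded Ω) :
    ∫ x in Ω, g x ^ 2 ∂μ + 2 * ∫ x in Ω, f x * g x ∂μ ≤ ∫ x in Ω, (f x + g x) ^ 2 ∂μ := by
  have hsplit : ∀ x, (f x + g x) ^ 2 = f x ^ 2 + (g x ^ 2 + 2 * (f x * g x)) := fun x => by ring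
  have hint : ∀ {h : X → ℝ}, Continuous h → IntegrableOn h Ω μ :=
    fun hh => hh.integrableOn_of_isBounded hΩ
  simp only [hsplit]
  rw [integral_add (hint (by fun_prop)) (hint (by fun_prop)),
    integral_add (hint (by fun_prop)) (hint (by fun_prop)), integral_const_mul]
  have : 0 ≤ ∫ x in Ω, f x ^ 2 ∂μ := integral_nonneg fun x => sq_nonneg _
  linarith

end SquareExpansion

theorem stmt16_general (n : ℕ) (Ω : Set (EuclideanSpace ℝ (Fin n)))
    (hΩb : Bornology.IsBounded Ω)
    (ν : EuclideanSpace ℝ (Fin n) → EuclideanSpace ℝ (Fin n))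
    (σ : Measure (EuclideanSpace ℝ (Fin n)))
    (hν : ∀ x ∈ frontier Ω, ‖ν x‖ = 1)
    -- the divergence theorem on `Ω`, with outward unit normal `ν` and surface measure `σ`
    (hdiv : ∀ F : EuclideanSpace ℝ (Fin n) → EuclideanSpace ℝ (Fin n), ContDiff ℝ 1 F →
      ∫ x in Ω, divg F x = ∫ x in frontier Ω, ⟪F x, ν x⟫ ∂σ)
    (η₁ : EuclideanSpace ℝ (Fin n))
    (ρ : ℝ)
    (w : EuclideanSpace ℝ (Fin n) → ℝ) (hw : ContDiff ℝ 2 w)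
    (hw0 : ∀ x ∈ frontier Ω, w x = 0)
    (hgrad : ∀ x ∈ frontier Ω, gradient w x = (fderiv ℝ w x (ν x)) • ν x) :
    (∫ x in Ω, (2 * ρ * fderiv ℝ w x η₁) ^ 2)
        + 2 * ρ * ∫ x in frontier Ω, (fderiv ℝ w x (ν x)) ^ 2 * ⟪η₁, ν x⟫ ∂σ
      ≤ ∫ x in Ω, ((lap w x + ρ ^ 2 * w x) + 2 * ρ * fderiv ℝ w x η₁) ^ 2 := by
  have hL := continuous_lap hw
  have hD := (contDiff_fderiv_apply hw η₁).continuous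
  have hw' := hw.continuous
  have hint : ∀ {h : EuclideanSpace ℝ (Fin n) → ℝ}, Continuous h → IntegrableOn h Ω :=
    fun hh => hh.integrableOn_of_isBounded hΩb
  have hcross : ∫ x in Ω, (lap w x + ρ ^ 2 * w x) * (2 * ρ * fderiv ℝ w x η₁)
      = ρ * ∫ x in frontier Ω, (fderiv ℝ w x (ν x)) ^ 2 * ⟪η₁, ν x⟫ ∂σ := by
    have hsplit : ∀ x, (lap w x + ρ ^ 2 * w x) * (2 * ρ * fderiv ℝ w x η₁)
        = ρ * (2 * fderiv ℝ w x η₁ * lap w x) + ρ ^ 3 * (2 * w x * fderiv ℝ w x η₁) :=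
      fun x => by ring
    simp only [hsplit]
    rw [integral_add (hint (by fun_prop)) (hint (by fun_prop)),
      integral_const_mul, integral_const_mul, setIntegral_fderiv_mul_lap hdiv hν hw hgrad,
      setIntegral_mul_fderiv_eq_zero hdiv (hw.of_le one_le_two) hw0]
    ring
  calc _ = (∫ x in Ω, (2 * ρ * fderiv ℝ w x η₁) ^ 2)
        + 2 * ∫ x in Ω, (lap w x + ρ ^ 2 * w x) * (2 * ρ * fderiv ℝ w x η₁) := by
        rw [hcross]; ring
    _ ≤ _ := setIntegral_sq_add_two_mul_le (f := fun x => lap w x + ρ ^ 2 * w x)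
        (hL.add (continuous_const.mul hw')) (continuous_const.mul hD) hΩb

theorem stmt16 (n : ℕ) (Ω : Set (EuclideanSpace ℝ (Fin n)))
    (hΩo : IsOpen Ω) (hΩb : Bornology.IsBounded Ω)
    (ν : EuclideanSpace ℝ (Fin n) → EuclideanSpace ℝ (Fin n))
    (σ : Measure (EuclideanSpace ℝ (Fin n)))
    (hν : ∀ x ∈ frontier Ω, ‖ν x‖ = 1)
    -- the divergence theorem on `Ω`, with outward unit normal `ν` and surface measure `σ`
    (hdiv : ∀ F : EuclideanSpace ℝ (Fin n) → EuclideanSpace ℝ (Fin n), ContDiff ℝ 1 F →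
      ∫ x in Ω, divg F x = ∫ x in frontier Ω, ⟪F x, ν x⟫ ∂σ)
    (η₁ : EuclideanSpace ℝ (Fin n)) (hη₁ : ‖η₁‖ = 1)
    (ρ : ℝ) (hρ : 0 < ρ)
    (w : EuclideanSpace ℝ (Fin n) → ℝ) (hw : ContDiff ℝ 2 w)
    (hw0 : ∀ x ∈ frontier Ω, w x = 0)
    (hgrad : ∀ x ∈ frontier Ω, gradient w x = (fderiv ℝ w x (ν x)) • ν x) :
    (∫ x in Ω, (2 * ρ * fderiv ℝ w x η₁) ^ 2)
        + 2 * ρ * ∫ x in frontier Ω, (fderiv ℝ w x (ν x)) ^ 2 * ⟪η₁, ν x⟫ ∂σ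
      ≤ ∫ x in Ω, ((lap w x + ρ ^ 2 * w x) + 2 * ρ * fderiv ℝ w x η₁) ^ 2 :=
  stmt16_general n Ω hΩb ν σ hν hdiv η₁ ρ w hw hw0 hgrad
end
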